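/- Let G be a group, A an abelian group (written additively), and φ₁, …, φ_k : G → A homomorphisms (k ≥ 2). Then 𝓡(φ₁, …, φ_k) is the quotient abelian group A^{k−1}/Im D, where D : G → A^{k−1} is the homomorphism D(z) = (φ₂(z) − φ₁(z), …, φ_k(z) − φ₁(z)); the map Ψ : 𝓡(φ₁, …, φ_k) → 𝓡(φ₁, φ₂) × ⋯ × 𝓡(φ₁, φ_k), Ψ([(α₂, …, α_k)]) = ([α₂], …, [α_k]), is a surjective group homomorphism, so that 𝓡(φ₁, …, φ_k)/ker Ψ ≅ 𝓡(φ₁, φ₂) × ⋯ × 𝓡(φ₁, φ_k); and if R(φ₁, …, φ_k) < ∞, then R(φ₁, …, φ_k) = R(φ₁, φ₂)⋯R(φ₁, φ_k)·|ker Ψ|. -/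

import Mathlib

/-!
With `A` abelian, `β = φ₁(z) + α - D(z)` says exactly that `α` and `β` differ by an element of
`Im D`, so the Reidemeister classes are the cosets of `Im D`. Reducing each coordinate modulo
`Im (φᵢ - φ₁)` kills `Im D`, hence induces `Ψ`, which is onto because coordinatewise reduction
already is. The counting formula is Lagrange's theorem for `ker Ψ`.
-/

/-- The relation on `(k-1)`-tuples (`k = m+1`) defining the Reidemeister classes of a family
of homomorphisms `φ₁, …, φ_k : G → A` into an (additively written) group:
`(α₂,…,α_k) ∼ (β₂,…,β_k)` iff there is `z : G` with `β_i = φ₁(z) + α_i - φ_i(z)` for all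
`i`.  The family is indexed by `Fin (m+1)`, `φ 0` playing the role of `φ₁`. -/
def mRelAdd {G A : Type*} [AddGroup G] [AddGroup A] {m : ℕ} (φ : Fin (m + 1) → (G →+ A))
    (α β : Fin m → A) : Prop :=
  ∃ z : G, ∀ i : Fin m, β i = φ 0 z + α i - φ i.succ z

/-- The homomorphism `D : G → A^{k-1}`, `D(z) = (φ₂(z) - φ₁(z), …, φ_k(z) - φ₁(z))`. -/
def Dmap {G A : Type*} [AddGroup G] [AddCommGroup A] {m : ℕ}
    (φ : Fin (m + 1) → (G →+ A)) : G →+ (Fin m → A) :=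
  AddMonoidHom.mk' (fun z i => φ i.succ z - φ 0 z) (by
    intro a b
    funext i
    simp only [Pi.add_apply, map_add]
    abel)

open QuotientAddGroup

lemma AddMonoidHom.card_eq_card_mul_card_ker_of_surjective {M N : Type*} [AddGroup M]
    [AddGroup N] (f : M →+ N) (hf : Function.Surjective f) :
    Nat.card M = Nat.card N * Nat.card f.ker := by
  rw [AddSubgroup.card_eq_card_quotient_mul_card_addSubgroup f.ker,
    Nat.card_congr (quotientKerEquivOfSurjective f hf).toEquiv]

section Reidemeister

variable {G A : Type*} [AddGroup G] [AddCommGroup A] {m : ℕ} (φ : Fin (m + 1) → (G →+ A))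

@[simp]
lemma Dmap_apply (z : G) (i : Fin m) : Dmap φ z i = (φ i.succ - φ 0) z := rfl

lemma mRelAdd_iff_leftRel (α β : Fin m → A) :
    mRelAdd φ α β ↔ leftRel (Dmap φ).range α β := by
  rw [leftRel_apply]
  constructor
  · rintro ⟨z, h⟩
    refine ⟨-z, funext fun i => ?_⟩
    simp only [map_neg, Pi.neg_apply, Dmap_apply, Pi.add_apply, h i, AddMonoidHom.sub_apply]
    abel
  · rintro ⟨z, h⟩
    refine ⟨-z, fun i => ?_⟩
    have hi := congr_fun h i
    simp only [Dmap_apply, AddMonoidHom.sub_apply, Pi.add_apply, Pi.neg_apply] at hi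
    have hβ : β i = α i + (φ i.succ z - φ 0 z) := by rw [hi]; abel
    rw [hβ, map_neg, map_neg]
    abel

lemma range_Dmap_le_ker_piMap_mk' :
    (Dmap φ).range ≤ (AddMonoidHom.piMap fun i : Fin m => mk' (φ i.succ - φ 0).range).ker := by
  rintro _ ⟨z, rfl⟩
  rw [AddMonoidHom.mem_ker]
  funext i
  exact (eq_zero_iff _).mpr ⟨z, rfl⟩

/-- The map `Ψ([(α₂, …, α_k)]) = ([α₂], …, [α_k])`. -/
def reidemeisterProj :
    (Fin m → A) ⧸ (Dmap φ).range →+ ∀ i : Fin m, A ⧸ (φ i.succ - φ 0).range :=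
  lift _ _ (range_Dmap_le_ker_piMap_mk' φ)

@[simp]
lemma reidemeisterProj_mk (α : Fin m → A) :
    reidemeisterProj φ α = fun i => (α i : A ⧸ (φ i.succ - φ 0).range) := rfl

lemma reidemeisterProj_surjective : Function.Surjective (reidemeisterProj φ) :=
  lift_surjective_of_surjective _ _
    (Function.Surjective.piMap fun _ => mk'_surjective _) (range_Dmap_le_ker_piMap_mk' φ)

end Reidemeister

theorem reidemeister_abelian_structure_general {G A : Type*} [AddGroup G] [AddCommGroup A] {m : ℕ}
    (φ : Fin (m + 1) → (G →+ A)) :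
    (∃ e : Quot (mRelAdd φ) ≃ ((Fin m → A) ⧸ (Dmap φ).range),
      ∀ α : Fin m → A, e (Quot.mk _ α) = QuotientAddGroup.mk α) ∧
    ∃ Ψ : ((Fin m → A) ⧸ (Dmap φ).range) →+ (∀ i : Fin m, A ⧸ (φ i.succ - φ 0).range),
      (∀ α : Fin m → A,
        Ψ (QuotientAddGroup.mk α) = fun i => QuotientAddGroup.mk (α i)) ∧
      Function.Surjective Ψ ∧
      Nonempty ((((Fin m → A) ⧸ (Dmap φ).range) ⧸ Ψ.ker) ≃+
        (∀ i : Fin m, A ⧸ (φ i.succ - φ 0).range)) ∧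
      (ENat.card ((Fin m → A) ⧸ (Dmap φ).range) < ⊤ →
        Nat.card ((Fin m → A) ⧸ (Dmap φ).range) =
          (∏ i : Fin m, Nat.card (A ⧸ (φ i.succ - φ 0).range)) * Nat.card Ψ.ker) := by
  have hsurj := reidemeisterProj_surjective φ
  refine ⟨⟨Quot.congrRight (mRelAdd_iff_leftRel φ), fun α => rfl⟩, reidemeisterProj φ,
    reidemeisterProj_mk φ, hsurj, ⟨quotientKerEquivOfSurjective _ hsurj⟩, fun _ => ?_⟩
  rw [← Nat.card_pi]
  exact (reidemeisterProj φ).card_eq_card_mul_card_ker_of_surjective hsurj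

/-- Let `G` be a group, `A` an abelian group and `φ₁,…,φ_k : G → A` homomorphisms
(`k = m+1 ≥ 2`).  Then `𝓡(φ₁,…,φ_k)` is the quotient abelian group `A^{k-1} ⧸ Im D` where
`D(z) = (φ₂(z) - φ₁(z), …, φ_k(z) - φ₁(z))` (i.e. there is a bijection sending the class of
a tuple to its coset); the map `Ψ([(α₂,…,α_k)]) = ([α₂],…,[α_k])` is a surjective group
homomorphism onto `𝓡(φ₁,φ₂) × ⋯ × 𝓡(φ₁,φ_k)`, so that `𝓡(φ₁,…,φ_k) ⧸ ker Ψ` is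
isomorphic to `𝓡(φ₁,φ₂) × ⋯ × 𝓡(φ₁,φ_k)`; and if `R(φ₁,…,φ_k) < ∞` then
`R(φ₁,…,φ_k) = R(φ₁,φ₂)⋯R(φ₁,φ_k)·|ker Ψ|`. -/
theorem reidemeister_abelian_structure {G A : Type*} [AddGroup G] [AddCommGroup A] {m : ℕ}
    (hm : 1 ≤ m) (φ : Fin (m + 1) → (G →+ A)) :
    (∃ e : Quot (mRelAdd φ) ≃ ((Fin m → A) ⧸ (Dmap φ).range),
      ∀ α : Fin m → A, e (Quot.mk _ α) = QuotientAddGroup.mk α) ∧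
    ∃ Ψ : ((Fin m → A) ⧸ (Dmap φ).range) →+ (∀ i : Fin m, A ⧸ (φ i.succ - φ 0).range),
      (∀ α : Fin m → A,
        Ψ (QuotientAddGroup.mk α) = fun i => QuotientAddGroup.mk (α i)) ∧
      Function.Surjective Ψ ∧
      Nonempty ((((Fin m → A) ⧸ (Dmap φ).range) ⧸ Ψ.ker) ≃+
        (∀ i : Fin m, A ⧸ (φ i.succ - φ 0).range)) ∧
      (ENat.card ((Fin m → A) ⧸ (Dmap φ).range) < ⊤ →
        Nat.card ((Fin m → A) ⧸ (Dmap φ).range) =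
          (∏ i : Fin m, Nat.card (A ⧸ (φ i.succ - φ 0).range)) * Nat.card Ψ.ker) :=
  reidemeister_abelian_structure_general φ
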